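/- arXiv:1404.1366 — 4 statements merged into one kernel-verified Lean document; each statement's English description precedes it below -/
import Mathlib

section
/- For any two quantum states (density operators) ρ and σ on a finite-dimensional Hilbert space, Tr(√ρ·√σ) ≥ 1 − (1/2)‖ρ − σ‖₁ ≥ 1 − √(1 − F(ρ,σ)²), where F(ρ,σ) = ‖√ρ·√σ‖₁ is the fidelity and ‖·‖₁ is the trace norm. -/
open Matrix
open scoped Kronecker ComplexOrder

noncomputable section

def mfun {n : Type*} [Fintype n] [DecidableEq n] (f : ℝ → ℝ) (A : Matrix n n ℂ) : Matrix n n ℂ :=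
  if h : A.IsHermitian then
    h.eigenvectorUnitary.1 * Matrix.diagonal (fun i => (f (h.eigenvalues i) : ℂ)) *
      (star h.eigenvectorUnitary.1)
  else 0

def psqrt {n : Type*} [Fintype n] [DecidableEq n] (A : Matrix n n ℂ) : Matrix n n ℂ :=
  mfun Real.sqrt A

def mlog {n : Type*} [Fintype n] [DecidableEq n] (A : Matrix n n ℂ) : Matrix n n ℂ :=
  mfun Real.log A

def traceNorm {n : Type*} [Fintype n] [DecidableEq n] (A : Matrix n n ℂ) : ℝ :=
  ((psqrt (Aᴴ * A)).trace).re

def fid {n : Type*} [Fintype n] [DecidableEq n] (ρ σ : Matrix n n ℂ) : ℝ :=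
  traceNorm (psqrt ρ * psqrt σ)

def vNEntropy {n : Type*} [Fintype n] [DecidableEq n] (A : Matrix n n ℂ) : ℝ :=
  - ((A * mlog A).trace).re

def relEnt {n : Type*} [Fintype n] [DecidableEq n] (ρ σ : Matrix n n ℂ) : ℝ :=
  ((ρ * mlog ρ).trace - (ρ * mlog σ).trace).re

/-!
Write `A = √ρ`, `B = √σ`, so that `ρ - σ = A² - B²`. Polar decomposition and Cauchy–Schwarz for
the Hilbert–Schmidt inner product give `‖C‖₁ = max_U Re Tr (U C)` over unitaries `U`.

Lower bound (Powers–Størmer): let `S` be the sign of `X = A - B`. From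
`2 (A² - B²) = X (A + B) + (A + B) X` we get `Tr (S (ρ - σ)) = Tr (|X| (A + B))`, and this is at
least `Tr X² = 2 - 2 Re Tr (A B)` because `|X| - X` and `|X| + X` are positive.

Upper bound: choose the unitary `V` with `F = Re Tr (A B V)`. Then
`2 (A² - B²) = (A - B V) (A + B V)ᴴ + (A + B V) (A - B V)ᴴ`, so Cauchy–Schwarz bounds `‖ρ - σ‖₁` by
`‖A - B V‖₂ ‖A + B V‖₂ = √((2 - 2F) (2 + 2F))`.
-/

namespace Matrix

variable {n : Type*} [Fintype n]

theorem re_trace_mul_conjTranspose_self_nonneg (Y : Matrix n n ℂ) : 0 ≤ (Y * Yᴴ).trace.re :=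
  (Complex.nonneg_iff.mp (posSemidef_self_mul_conjTranspose Y).trace_nonneg).1

variable [DecidableEq n]

theorem re_trace_mul_conjTranspose_le (X Y : Matrix n n ℂ) :
    (X * Yᴴ).trace.re ≤ √((X * Xᴴ).trace.re) * √((Y * Yᴴ).trace.re) := by
  let := toMatrixSeminormedAddCommGroup (1 : Matrix n n ℂ) PosSemidef.one
  let := toMatrixInnerProductSpace (1 : Matrix n n ℂ) PosSemidef.one
  have hinner : ∀ Z W : Matrix n n ℂ, inner ℂ W Z = (Z * Wᴴ).trace := fun Z W => by
    show (Z * 1 * Wᴴ).trace = _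
    rw [Matrix.mul_one]
  have hnorm : ∀ Z : Matrix n n ℂ, ‖Z‖ = √((Z * Zᴴ).trace.re) := fun Z => by
    rw [norm_eq_sqrt_re_inner (𝕜 := ℂ), hinner]
    rfl
  rw [← hnorm, ← hnorm, ← hinner]
  exact (Complex.re_le_norm _).trans ((norm_inner_le_norm Y X).trans_eq (mul_comm _ _))

theorem trace_unitary_mul_mul_conjTranspose {U : Matrix n n ℂ} (hU : U ∈ unitaryGroup n ℂ)
    (X : Matrix n n ℂ) : (U * X * (U * X)ᴴ).trace = (X * Xᴴ).trace := by
  rw [conjTranspose_mul, ← star_eq_conjTranspose U, ← Matrix.mul_assoc, trace_mul_comm]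
  simp only [← Matrix.mul_assoc, Unitary.star_mul_self_of_mem hU, Matrix.one_mul]

theorem mul_mul_conjTranspose_mul_of_mem_unitaryGroup {V : Matrix n n ℂ}
    (hV : V ∈ unitaryGroup n ℂ) (X Y : Matrix n n ℂ) : X * V * (Vᴴ * Y) = X * Y := by
  rw [Matrix.mul_assoc, ← Matrix.mul_assoc V, ← star_eq_conjTranspose,
    Unitary.mul_star_self_of_mem hV, Matrix.one_mul]

theorem norm_toEuclideanCLM_apply_eq {C D : Matrix n n ℂ} (h : Cᴴ * C = Dᴴ * D)
    (v : EuclideanSpace ℂ n) : ‖toEuclideanCLM (𝕜 := ℂ) C v‖ = ‖toEuclideanCLM (𝕜 := ℂ) D v‖ := by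
  have hsq : ∀ X : Matrix n n ℂ, ‖toEuclideanCLM (𝕜 := ℂ) X v‖ ^ 2 =
      RCLike.re (inner ℂ (toEuclideanCLM (𝕜 := ℂ) (Xᴴ * X) v) v) := fun X => by
    rw [ContinuousLinearMap.apply_norm_sq_eq_inner_adjoint_left, ← star_eq_conjTranspose,
      map_mul, map_star, ContinuousLinearMap.star_eq_adjoint]
    rfl
  have hCD := hsq C
  rw [h, ← hsq D] at hCD
  exact (sq_eq_sq₀ (norm_nonneg _) (norm_nonneg _)).mp hCD

theorem exists_unitary_eq_mul_of_conjTranspose_mul_self_eq {C P : Matrix n n ℂ}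
    (h : Cᴴ * C = Pᴴ * P) : ∃ W ∈ unitaryGroup n ℂ, C = W * P := by
  -- `P v ↦ C v` is a well-defined isometry from the range of `P`; extend it to a unitary.
  set c : EuclideanSpace ℂ n →ₗ[ℂ] EuclideanSpace ℂ n :=
    (toEuclideanCLM (𝕜 := ℂ) C :)
  set p : EuclideanSpace ℂ n →ₗ[ℂ] EuclideanSpace ℂ n :=
    (toEuclideanCLM (𝕜 := ℂ) P :)
  have hnorm : ∀ v, ‖c v‖ = ‖p v‖ := norm_toEuclideanCLM_apply_eq h
  have hker : LinearMap.ker p ≤ LinearMap.ker c := fun v hv => by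
    simpa [← norm_eq_zero, hnorm] using hv
  set L₀ := (LinearMap.ker p).liftQ c hker ∘ₗ p.quotKerEquivRange.symm.toLinearMap
  have hL₀ : ∀ v, L₀ ⟨p v, LinearMap.mem_range_self p v⟩ = c v := fun v => by
    simp [L₀, LinearMap.quotKerEquivRange_symm_apply_image]
  let L : LinearMap.range p →ₗᵢ[ℂ] EuclideanSpace ℂ n :=
    { toLinearMap := L₀
      norm_map' := by
        rintro ⟨_, v, rfl⟩
        exact (congrArg norm (hL₀ v)).trans (hnorm v) }
  refine ⟨(toEuclideanCLM (n := n) (𝕜 := ℂ)).symm L.extend.toContinuousLinearMap, ?_, ?_⟩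
  · rw [mem_unitaryGroup_iff', ← (EquivLike.injective (toEuclideanCLM (n := n) (𝕜 := ℂ))).eq_iff,
      map_mul, map_star, map_one, StarAlgEquiv.apply_symm_apply,
      ContinuousLinearMap.star_eq_adjoint]
    exact L.extend.adjoint_comp_self
  · apply EquivLike.injective (toEuclideanCLM (n := n) (𝕜 := ℂ))
    rw [map_mul, StarAlgEquiv.apply_symm_apply]
    ext1 v
    exact ((L.extend_apply ⟨p v, LinearMap.mem_range_self p v⟩).trans (hL₀ v)).symm

end Matrix

section

variable {n : Type*} [Fintype n] [DecidableEq n]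

theorem mfun_eq_cfc (f : ℝ → ℝ) (A : Matrix n n ℂ) : mfun f A = cfc f A := by
  by_cases hA : A.IsHermitian
  · rw [mfun, dif_pos hA, hA.cfc_eq, IsHermitian.cfc, Unitary.conjStarAlgAut_apply]
    rfl
  · rw [mfun, dif_neg hA, cfc_apply_of_not_predicate (p := IsSelfAdjoint) A hA]

theorem psqrt_eq_cfc (A : Matrix n n ℂ) : psqrt A = cfc Real.sqrt A := mfun_eq_cfc _ _

open scoped MatrixOrder in
theorem posSemidef_cfc {f : ℝ → ℝ} (hf : ∀ x, 0 ≤ f x) (A : Matrix n n ℂ) :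
    (cfc f A).PosSemidef :=
  Matrix.nonneg_iff_posSemidef.mp (cfc_nonneg fun x _ => hf x)

theorem posSemidef_psqrt (A : Matrix n n ℂ) : (psqrt A).PosSemidef := by
  rw [psqrt_eq_cfc]
  exact posSemidef_cfc Real.sqrt_nonneg A

open scoped MatrixOrder in
theorem psqrt_mul_psqrt {A : Matrix n n ℂ} (hA : A.PosSemidef) : psqrt A * psqrt A = A := by
  rw [psqrt_eq_cfc, ← cfc_mul Real.sqrt Real.sqrt A]
  conv_rhs => rw [← cfc_id' ℝ A]
  refine cfc_congr fun x hx => Real.mul_self_sqrt ?_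
  exact spectrum_nonneg_of_nonneg (Matrix.nonneg_iff_posSemidef.mpr hA) hx

theorem Matrix.PosSemidef.trace_mul_nonneg {P Q : Matrix n n ℂ} (hP : P.PosSemidef)
    (hQ : Q.PosSemidef) : 0 ≤ (P * Q).trace := by
  have hQR : Q = psqrt Q * (psqrt Q)ᴴ := by
    rw [(posSemidef_psqrt Q).1.eq, psqrt_mul_psqrt hQ]
  rw [hQR, ← Matrix.mul_assoc, trace_mul_comm, ← Matrix.mul_assoc]
  exact (hP.conjTranspose_mul_mul_same _).trace_nonneg

theorem exists_unitary_eq_mul_psqrt (C : Matrix n n ℂ) :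
    ∃ W ∈ unitaryGroup n ℂ, C = W * psqrt (Cᴴ * C) := by
  refine Matrix.exists_unitary_eq_mul_of_conjTranspose_mul_self_eq ?_
  rw [(posSemidef_psqrt _).1.eq, psqrt_mul_psqrt (posSemidef_conjTranspose_mul_self C)]

theorem exists_unitary_traceNorm_eq_re_trace_mul (C : Matrix n n ℂ) :
    ∃ U ∈ unitaryGroup n ℂ, traceNorm C = (U * C).trace.re := by
  obtain ⟨W, hW, hC⟩ := exists_unitary_eq_mul_psqrt C
  refine ⟨star W, Unitary.star_mem hW, ?_⟩
  conv_rhs => rw [hC, ← Matrix.mul_assoc, Unitary.star_mul_self_of_mem hW, Matrix.one_mul]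
  rfl

theorem re_trace_unitary_mul_le_traceNorm {U : Matrix n n ℂ} (hU : U ∈ unitaryGroup n ℂ)
    (C : Matrix n n ℂ) : (U * C).trace.re ≤ traceNorm C := by
  obtain ⟨W, hW, hC⟩ := exists_unitary_eq_mul_psqrt C
  set P := psqrt (Cᴴ * C)
  set R := psqrt P
  have hR : Rᴴ = R := (posSemidef_psqrt P).1.eq
  have hRR : R * Rᴴ = P := by rw [hR, psqrt_mul_psqrt (posSemidef_psqrt _)]
  have hP : 0 ≤ P.trace.re := (Complex.nonneg_iff.mp (posSemidef_psqrt _).trace_nonneg).1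
  calc (U * C).trace.re = (U * W * R * Rᴴ).trace.re := by
        rw [Matrix.mul_assoc _ R, hRR, hC, Matrix.mul_assoc]
    _ ≤ √((U * W * R * (U * W * R)ᴴ).trace.re) * √((R * Rᴴ).trace.re) :=
        re_trace_mul_conjTranspose_le _ _
    _ = traceNorm C := by
        rw [Matrix.mul_assoc U, trace_unitary_mul_mul_conjTranspose hU,
          trace_unitary_mul_mul_conjTranspose hW, hRR, Real.mul_self_sqrt hP]
        rfl

theorem traceNorm_nonneg (C : Matrix n n ℂ) : 0 ≤ traceNorm C :=
  (Complex.nonneg_iff.mp (posSemidef_psqrt _).trace_nonneg).1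

def msign (X : Matrix n n ℂ) : Matrix n n ℂ := cfc (fun x : ℝ => if 0 ≤ x then 1 else -1) X

theorem msign_mem_unitaryGroup {X : Matrix n n ℂ} (hX : X.IsHermitian) :
    msign X ∈ unitaryGroup n ℂ := by
  have hS : IsSelfAdjoint (msign X) := cfc_predicate _ X
  rw [mem_unitaryGroup_iff', hS.star_eq, msign,
    ← cfc_mul _ _ X (X.finite_real_spectrum.continuousOn _)
      (X.finite_real_spectrum.continuousOn _)]
  refine (cfc_congr fun x _ => ?_).trans (cfc_const_one ℝ X)
  split_ifs <;> norm_num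

theorem msign_mul_self {X : Matrix n n ℂ} (hX : X.IsHermitian) :
    msign X * X = cfc (fun x : ℝ => |x|) X := by
  conv_lhs => arg 2; rw [← cfc_id' ℝ X]
  rw [msign, ← cfc_mul _ _ X (X.finite_real_spectrum.continuousOn _)]
  refine cfc_congr fun x _ => ?_
  split_ifs with h
  · rw [one_mul, abs_of_nonneg h]
  · rw [neg_one_mul, abs_of_neg (not_le.mp h)]

theorem trace_msign_mul_mul_self_sub {A B : Matrix n n ℂ} (hA : A.IsHermitian)
    (hB : B.IsHermitian) :
    (msign (A - B) * (A * A - B * B)).trace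
      = (cfc (fun x : ℝ => |x|) (A - B) * (A + B)).trace := by
  set X := A - B
  have hX : X.IsHermitian := hA.sub hB
  have hcomm : X * msign X = msign X * X := by
    have h := (cfc_commute_cfc (R := ℝ) (fun x => x) (fun x => if 0 ≤ x then 1 else -1) X).eq
    rw [cfc_id' ℝ X] at h
    exact h
  have hsplit : A * A - B * B + (A * A - B * B) = X * (A + B) + (A + B) * X := by
    simp only [X]; noncomm_ring
  have h₁ : (msign X * (X * (A + B))).trace = (cfc (fun x : ℝ => |x|) X * (A + B)).trace := by
    rw [← Matrix.mul_assoc, msign_mul_self hX]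
  have h₂ : (msign X * ((A + B) * X)).trace = (cfc (fun x : ℝ => |x|) X * (A + B)).trace := by
    rw [← Matrix.mul_assoc, trace_mul_cycle, hcomm, msign_mul_self hX]
  have htwice : (msign X * (A * A - B * B)).trace + (msign X * (A * A - B * B)).trace
      = (cfc (fun x : ℝ => |x|) X * (A + B)).trace
        + (cfc (fun x : ℝ => |x|) X * (A + B)).trace := by
    rw [← trace_add, ← Matrix.mul_add, hsplit, Matrix.mul_add, trace_add, h₁, h₂]
  linear_combination htwice / 2

theorem re_trace_sub_mul_sub_le {A B : Matrix n n ℂ} (hA : A.PosSemidef) (hB : B.PosSemidef) :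
    ((A - B) * (A - B)).trace.re ≤ (cfc (fun x : ℝ => |x|) (A - B) * (A + B)).trace.re := by
  set X := A - B
  have hX : X.IsHermitian := hA.1.sub hB.1
  set absX := cfc (fun x : ℝ => |x|) X
  have hneg : cfc (fun x : ℝ => |x| - x) X = absX - X := by
    rw [cfc_sub (fun x : ℝ => |x|) (fun x => x) X, cfc_id' ℝ X]
  have hpos : cfc (fun x : ℝ => |x| + x) X = absX + X := by
    rw [cfc_add (a := X) (fun x : ℝ => |x|) (fun x => x), cfc_id' ℝ X]
  have hgap : (absX * (A + B)).trace - (X * X).trace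
      = ((absX - X) * A).trace + ((absX + X) * B).trace := by
    nth_rewrite 2 [show X = A - B from rfl]
    simp only [Matrix.sub_mul, Matrix.add_mul, Matrix.mul_add, Matrix.mul_sub, trace_add,
      trace_sub]
    ring
  have hnegA : 0 ≤ ((absX - X) * A).trace := hneg ▸
    (posSemidef_cfc (fun x => sub_nonneg.mpr (le_abs_self x)) X).trace_mul_nonneg hA
  have hposB : 0 ≤ ((absX + X) * B).trace := hpos ▸
    (posSemidef_cfc (fun x => by linarith [neg_abs_le x]) X).trace_mul_nonneg hB
  have h := congrArg Complex.re hgap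
  simp only [Complex.sub_re, Complex.add_re] at h
  linarith [(Complex.nonneg_iff.mp hnegA).1, (Complex.nonneg_iff.mp hposB).1]

theorem re_trace_sub_mul_sub_le_traceNorm {A B : Matrix n n ℂ} (hA : A.PosSemidef)
    (hB : B.PosSemidef) : ((A - B) * (A - B)).trace.re ≤ traceNorm (A * A - B * B) := by
  calc ((A - B) * (A - B)).trace.re
      ≤ (cfc (fun x : ℝ => |x|) (A - B) * (A + B)).trace.re := re_trace_sub_mul_sub_le hA hB
    _ = (msign (A - B) * (A * A - B * B)).trace.re := by
        rw [trace_msign_mul_mul_self_sub hA.1 hB.1]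
    _ ≤ traceNorm (A * A - B * B) :=
        re_trace_unitary_mul_le_traceNorm (msign_mem_unitaryGroup (hA.1.sub hB.1)) _

theorem re_trace_add_mul_mul_conjTranspose {A B V : Matrix n n ℂ} (hA : A.IsHermitian)
    (hB : B.IsHermitian) (hV : V ∈ unitaryGroup n ℂ) :
    ((A + B * V) * (A + B * V)ᴴ).trace.re
      = (A * A).trace.re + (B * B).trace.re + 2 * (A * B * V).trace.re := by
  have hcross : A * Vᴴ * B = (B * V * A)ᴴ := by
    rw [conjTranspose_mul, conjTranspose_mul, hA.eq, hB.eq, Matrix.mul_assoc]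
  rw [conjTranspose_add, conjTranspose_mul, hA.eq, hB.eq]
  simp only [Matrix.add_mul, Matrix.mul_add, trace_add, Complex.add_re,
    mul_mul_conjTranspose_mul_of_mem_unitaryGroup hV]
  rw [← Matrix.mul_assoc A, hcross, trace_conjTranspose, trace_mul_cycle]
  simp only [Complex.star_def, Complex.conj_re]
  ring

theorem traceNorm_mul_self_sub_sq_le {A B V : Matrix n n ℂ} (hA : A.IsHermitian)
    (hB : B.IsHermitian) (hV : V ∈ unitaryGroup n ℂ) :
    traceNorm (A * A - B * B) ^ 2
      ≤ ((A * A).trace.re + (B * B).trace.re) ^ 2 - 4 * (A * B * V).trace.re ^ 2 := by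
  set s := (A * A).trace.re + (B * B).trace.re
  set x := (A * B * V).trace.re
  set T := traceNorm (A * A - B * B)
  obtain ⟨U, hU, hT⟩ := exists_unitary_traceNorm_eq_re_trace_mul (A * A - B * B)
  set Yp := A + B * V
  set Ym := A + B * -V
  have hYp : (Yp * Ypᴴ).trace.re = s + 2 * x := re_trace_add_mul_mul_conjTranspose hA hB hV
  have hYm : (Ym * Ymᴴ).trace.re = s - 2 * x := by
    have hnegV : -V ∈ unitaryGroup n ℂ := by
      rw [mem_unitaryGroup_iff', star_neg, neg_mul_neg]
      exact mem_unitaryGroup_iff'.mp hV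
    rw [re_trace_add_mul_mul_conjTranspose hA hB hnegV]
    simp only [Matrix.mul_neg, trace_neg, Complex.neg_re]
    ring
  have hYp_nonneg : 0 ≤ s + 2 * x := hYp ▸ re_trace_mul_conjTranspose_self_nonneg Yp
  have hYm_nonneg : 0 ≤ s - 2 * x := hYm ▸ re_trace_mul_conjTranspose_self_nonneg Ym
  have hsplit : A * A - B * B + (A * A - B * B) = Ym * Ypᴴ + Yp * Ymᴴ := by
    rw [← mul_mul_conjTranspose_mul_of_mem_unitaryGroup hV B B]
    simp only [Yp, Ym, conjTranspose_add, conjTranspose_mul, conjTranspose_neg, hA.eq, hB.eq]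
    noncomm_ring
  have hcs : ∀ Y Z : Matrix n n ℂ,
      (U * (Y * Zᴴ)).trace.re ≤ √((Y * Yᴴ).trace.re) * √((Z * Zᴴ).trace.re) := fun Y Z => by
    rw [← Matrix.mul_assoc, ← trace_unitary_mul_mul_conjTranspose hU Y]
    exact re_trace_mul_conjTranspose_le _ _
  have hT_le : T ≤ √(s - 2 * x) * √(s + 2 * x) := by
    have h := congrArg (fun M => (U * M).trace.re) hsplit
    simp only [Matrix.mul_add, trace_add, Complex.add_re] at h
    have h₁ := hcs Ym Yp
    have h₂ := hcs Yp Ym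
    rw [hYp, hYm] at h₁ h₂
    linarith
  calc T ^ 2 ≤ (√(s - 2 * x) * √(s + 2 * x)) ^ 2 :=
        pow_le_pow_left₀ (traceNorm_nonneg _) hT_le 2
    _ = (s - 2 * x) * (s + 2 * x) := by
        rw [mul_pow, Real.sq_sqrt hYm_nonneg, Real.sq_sqrt hYp_nonneg]
    _ = s ^ 2 - 4 * x ^ 2 := by ring

theorem two_sub_two_re_trace_psqrt_mul_le_traceNorm_sub {ρ σ : Matrix n n ℂ}
    (hρ : ρ.PosSemidef) (hσ : σ.PosSemidef) (hρ1 : ρ.trace = 1) (hσ1 : σ.trace = 1) :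
    2 - 2 * (psqrt ρ * psqrt σ).trace.re ≤ traceNorm (ρ - σ) := by
  set A := psqrt ρ
  set B := psqrt σ
  have h := re_trace_sub_mul_sub_le_traceNorm (posSemidef_psqrt ρ) (posSemidef_psqrt σ)
  have hsq : ((A - B) * (A - B)).trace = 2 - 2 * (A * B).trace := by
    rw [Matrix.sub_mul, Matrix.mul_sub, Matrix.mul_sub, trace_sub, trace_sub, trace_sub,
      trace_mul_comm B A, psqrt_mul_psqrt hρ, psqrt_mul_psqrt hσ, hρ1, hσ1]
    ring
  rw [psqrt_mul_psqrt hρ, psqrt_mul_psqrt hσ, hsq] at h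
  simpa using h

theorem traceNorm_sub_le_two_mul_sqrt_one_sub_fid_sq {ρ σ : Matrix n n ℂ}
    (hρ : ρ.PosSemidef) (hσ : σ.PosSemidef) (hρ1 : ρ.trace = 1) (hσ1 : σ.trace = 1) :
    traceNorm (ρ - σ) ≤ 2 * √(1 - fid ρ σ ^ 2) := by
  obtain ⟨U, hU, hF⟩ := exists_unitary_traceNorm_eq_re_trace_mul (psqrt ρ * psqrt σ)
  have h := traceNorm_mul_self_sub_sq_le (posSemidef_psqrt ρ).1 (posSemidef_psqrt σ).1 hU
  rw [trace_mul_comm _ U, ← hF, psqrt_mul_psqrt hρ, psqrt_mul_psqrt hσ, hρ1, hσ1] at h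
  have h' : (traceNorm (ρ - σ) / 2) ^ 2 ≤ 1 - fid ρ σ ^ 2 := by
    rw [fid]
    norm_num at h
    linarith
  linarith [(le_abs_self _).trans (Real.abs_le_sqrt h')]

end

/-- For density matrices ρ, σ,
`Tr(√ρ·√σ) ≥ 1 − (1/2)‖ρ − σ‖₁ ≥ 1 − √(1 − F(ρ,σ)²)`. -/
theorem stmt0 {n : Type*} [Fintype n] [DecidableEq n]
    (ρ σ : Matrix n n ℂ) (hρ : ρ.PosSemidef) (hσ : σ.PosSemidef)
    (hρ1 : ρ.trace = 1) (hσ1 : σ.trace = 1) :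
    1 - traceNorm (ρ - σ) / 2 ≤ (((psqrt ρ * psqrt σ).trace)).re ∧
    1 - Real.sqrt (1 - fid ρ σ ^ 2) ≤ 1 - traceNorm (ρ - σ) / 2 := by
  constructor
  · linarith [two_sub_two_re_trace_psqrt_mul_le_traceNorm_sub hρ hσ hρ1 hσ1]
  · linarith [traceNorm_sub_le_two_mul_sqrt_one_sub_fid_sq hρ hσ hρ1 hσ1]
end
end

section
/- For any two positive semidefinite operators A, B on a finite-dimensional Hilbert space, ‖A − B‖₁ ≥ ‖√A − √B‖₂², where ‖·‖₁ is the trace norm and ‖·‖₂ is the Hilbert–Schmidt (Frobenius) norm. -/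
open Matrix
open scoped Kronecker ComplexOrder

noncomputable section

/-! Write `D = √A - √B = U diag(d) U*` and `S = √A + √B`. Since `A - B = (D S + S D) / 2`, the
diagonal entries of `U* (A - B) U` are `dᵢ (U* S U)ᵢᵢ`, and `U* S U ± diag(d)` are positive
semidefinite, so `(U* S U)ᵢᵢ ≥ |dᵢ|`. Hence `‖D‖₂² = ∑ dᵢ² ≤ ∑ |(U* (A - B) U)ᵢᵢ|`, and the
diagonal of a Hermitian matrix `X = X⁺ - X⁻` in any basis has absolute sum at most
`Tr (X⁺ + X⁻) = ‖X‖₁`. -/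

open scoped MatrixOrder

namespace Matrix

variable {n : Type*}

lemma PosSemidef.abs_re_diag_sub_le {M N : Matrix n n ℂ} (hM : M.PosSemidef) (hN : N.PosSemidef)
    (i : n) : |((M - N) i i).re| ≤ ((M + N) i i).re := by
  have hMi : 0 ≤ (M i i).re := Complex.nonneg_iff.mp hM.diag_nonneg |>.1
  have hNi : 0 ≤ (N i i).re := Complex.nonneg_iff.mp hN.diag_nonneg |>.1
  simp only [sub_apply, add_apply, Complex.sub_re, Complex.add_re]
  exact abs_le.mpr ⟨by linarith, by linarith⟩

variable [Fintype n] [DecidableEq n]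

lemma mfun_eq_cfc {A : Matrix n n ℂ} (hA : A.IsHermitian) (f : ℝ → ℝ) : mfun f A = cfc f A := by
  rw [mfun, dif_pos hA, hA.cfc_eq, IsHermitian.cfc]
  rfl

lemma psqrt_eq_cfcSqrt {A : Matrix n n ℂ} (hA : A.PosSemidef) : psqrt A = CFC.sqrt A := by
  rw [psqrt, mfun_eq_cfc hA.1, CFC.sqrt_eq_real_sqrt A hA.nonneg, cfcₙ_eq_cfc]

lemma PosSemidef.posSemidef_psqrt {A : Matrix n n ℂ} (hA : A.PosSemidef) : (psqrt A).PosSemidef :=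
  nonneg_iff_posSemidef.mp (psqrt_eq_cfcSqrt hA ▸ CFC.sqrt_nonneg A)

lemma PosSemidef.psqrt_mul_self {A : Matrix n n ℂ} (hA : A.PosSemidef) : psqrt A * psqrt A = A :=
  psqrt_eq_cfcSqrt hA ▸ CFC.sqrt_mul_sqrt_self A hA.nonneg

lemma traceNorm_eq_re_trace_cfcAbs (X : Matrix n n ℂ) : traceNorm X = (CFC.abs X).trace.re := by
  rw [traceNorm, psqrt_eq_cfcSqrt (posSemidef_conjTranspose_mul_self X)]
  rfl

lemma trace_conjStarAlgAut (U : unitaryGroup n ℂ) (M : Matrix n n ℂ) :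
    (Unitary.conjStarAlgAut ℂ _ U M).trace = M.trace := by
  rw [Unitary.conjStarAlgAut_apply, trace_mul_cycle, Unitary.coe_star_mul_self, one_mul]

lemma PosSemidef.conjStarAlgAut {M : Matrix n n ℂ} (hM : M.PosSemidef) (U : unitaryGroup n ℂ) :
    (Unitary.conjStarAlgAut ℂ _ U M).PosSemidef :=
  hM.mul_mul_conjTranspose_same U.1

lemma sum_abs_re_diag_conjStarAlgAut_le_traceNorm {X : Matrix n n ℂ} (hX : X.IsHermitian)
    (U : unitaryGroup n ℂ) :
    ∑ i, |(Unitary.conjStarAlgAut ℂ _ U X i i).re| ≤ traceNorm X := by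
  set φ := Unitary.conjStarAlgAut ℂ (Matrix n n ℂ) U
  have hpos : (φ X⁺).PosSemidef :=
    (nonneg_iff_posSemidef.mp (CFC.posPart_nonneg X)).conjStarAlgAut U
  have hneg : (φ X⁻).PosSemidef :=
    (nonneg_iff_posSemidef.mp (CFC.negPart_nonneg X)).conjStarAlgAut U
  calc ∑ i, |(φ X i i).re|
      = ∑ i, |((φ X⁺ - φ X⁻) i i).re| := by rw [← map_sub, CFC.posPart_sub_negPart X hX]
    _ ≤ ∑ i, ((φ X⁺ + φ X⁻) i i).re :=
      Finset.sum_le_sum fun i _ => hpos.abs_re_diag_sub_le hneg i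
    _ = traceNorm X := by
      rw [← map_add, CFC.posPart_add_negPart X hX, traceNorm_eq_re_trace_cfcAbs,
        ← trace_conjStarAlgAut U, trace, Complex.re_sum]
      rfl

lemma diag_mul_self_sub_mul_self_of_sub_eq_diagonal {R : Type*} [CommRing R]
    {P Q : Matrix n n R} {d : n → R} (h : P - Q = diagonal d) (i : n) :
    (P * P - Q * Q) i i = d i * (P + Q) i i := by
  obtain rfl : P = diagonal d + Q := sub_eq_iff_eq_add.mp h
  simp only [add_mul, mul_add, diagonal_mul_diagonal, sub_apply, add_apply, diagonal_mul,
    mul_diagonal, diagonal_apply_eq]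
  ring

end Matrix

/-- For PSD A, B: `‖A − B‖₁ ≥ ‖√A − √B‖₂²`. -/
theorem stmt1 {n : Type*} [Fintype n] [DecidableEq n]
    (A B : Matrix n n ℂ) (hA : A.PosSemidef) (hB : B.PosSemidef) :
    Real.sqrt ((((psqrt A - psqrt B)ᴴ * (psqrt A - psqrt B)).trace).re) ^ 2
      ≤ traceNorm (A - B) := by
  set P := psqrt A
  set Q := psqrt B
  have hP : P.PosSemidef := hA.posSemidef_psqrt
  have hQ : Q.PosSemidef := hB.posSemidef_psqrt
  have hD : (P - Q).IsHermitian := hP.1.sub hQ.1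
  set U := star hD.eigenvectorUnitary
  set φ := Unitary.conjStarAlgAut ℂ (Matrix n n ℂ) U
  set d := hD.eigenvalues
  have hφD : φ P - φ Q = diagonal (fun i => (d i : ℂ)) := by
    rw [← map_sub]; exact hD.conjStarAlgAut_star_eigenvectorUnitary
  have hφX : φ (A - B) = φ P * φ P - φ Q * φ Q := by
    rw [← hA.psqrt_mul_self, ← hB.psqrt_mul_self, map_sub, map_mul, map_mul]
  have hd_le : ∀ i, |d i| ≤ ((φ P + φ Q) i i).re := fun i => by
    have h := (hP.conjStarAlgAut U).abs_re_diag_sub_le (hQ.conjStarAlgAut U) i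
    rwa [hφD, diagonal_apply_eq, Complex.ofReal_re] at h
  have hfrob : ((P - Q)ᴴ * (P - Q)).trace.re = ∑ i, d i ^ 2 := by
    rw [hD.eq, ← trace_conjStarAlgAut U, map_mul, map_sub, hφD, diagonal_mul_diagonal,
      trace_diagonal, Complex.re_sum]
    simp only [← Complex.ofReal_mul, Complex.ofReal_re, sq]
  rw [Real.sq_sqrt (hfrob ▸ by positivity), hfrob]
  calc ∑ i, d i ^ 2 ≤ ∑ i, |(φ (A - B) i i).re| := Finset.sum_le_sum fun i _ => by
        rw [hφX, diag_mul_self_sub_mul_self_of_sub_eq_diagonal hφD i, Complex.re_ofReal_mul,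
          abs_mul, ← sq_abs, sq]
        exact mul_le_mul_of_nonneg_left ((hd_le i).trans (le_abs_self _)) (abs_nonneg _)
    _ ≤ traceNorm (A - B) := sum_abs_re_diag_conjStarAlgAut_le_traceNorm (hA.1.sub hB.1) U
end
end

section
/- Let ρ' and σ be quantum states on a finite-dimensional Hilbert space such that ρ' ≤ 2^c · σ in the Löwner order, for some real c. Let ρ' = Σᵢ gᵢ |gᵢ⟩⟨gᵢ| and σ = Σⱼ bⱼ |bⱼ⟩⟨bⱼ| be eigen-decompositions with orthonormal eigenbases. Then for every p > 0 and every index i with gᵢ > 0, Σ_{j : bⱼ ≤ p·gᵢ} |⟨bⱼ|gᵢ⟩|² ≤ 2^c · p. -/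
open Matrix
open scoped Kronecker ComplexOrder

noncomputable section

lemma my_vecMulVec_mulVec {N : ℕ} (u v w : Fin N → ℂ) :
    Matrix.vecMulVec u v *ᵥ w = (v ⬝ᵥ w) • u := by
  ext i; simp [Matrix.mulVec, Matrix.vecMulVec_apply, dotProduct, Finset.mul_sum, mul_assoc]
  rw [Finset.sum_mul]; congr 1; ext x; ring

lemma my_conj_dot {N : ℕ} (u w : Fin N → ℂ) :
    star w ⬝ᵥ u = (starRingEnd ℂ) (star u ⬝ᵥ w) := by
  simp [dotProduct, Finset.mul_sum, mul_comm]

lemma my_dot_sum {N : ℕ} (u : Fin N → ℂ) (f : Fin N → (Fin N → ℂ)) (s : Finset (Fin N)) :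
    u ⬝ᵥ (∑ k ∈ s, f k) = ∑ k ∈ s, u ⬝ᵥ f k := by
  simp [dotProduct, Finset.sum_apply, Finset.mul_sum]
  exact Finset.sum_comm

lemma my_sum_mulVec {N : ℕ} (M : Fin N → Matrix (Fin N) (Fin N) ℂ) (w : Fin N → ℂ) :
    (∑ k, M k) *ᵥ w = ∑ k, M k *ᵥ w :=
  map_sum (Matrix.mulVec.addMonoidHomLeft w) M Finset.univ

lemma my_mul_conj (z : ℂ) : z * (starRingEnd ℂ) z = ((‖z‖ : ℂ)) ^ 2 := by
  rw [Complex.mul_conj]; norm_cast; exact (Complex.sq_norm _).symm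

lemma my_quad {N : ℕ} (a : Fin N → ℝ) (v : Fin N → Fin N → ℂ) (w : Fin N → ℂ) :
    star w ⬝ᵥ ((∑ k, (a k : ℂ) • Matrix.vecMulVec (v k) (star (v k))) *ᵥ w)
      = ((∑ k, a k * ‖star (v k) ⬝ᵥ w‖ ^ 2 : ℝ) : ℂ) := by
  rw [my_sum_mulVec, my_dot_sum]
  push_cast
  refine Finset.sum_congr rfl fun k _ => ?_
  rw [Matrix.smul_mulVec, my_vecMulVec_mulVec, dotProduct_smul, dotProduct_smul,
    smul_eq_mul, smul_eq_mul]
  congr 1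
  rw [my_conj_dot, mul_comm, my_mul_conj]
  norm_cast
  simp


/-- If ρ' ≤ 2^c·σ (Löwner order) with eigen-decompositions
ρ' = Σᵢ gᵢ|gᵢ⟩⟨gᵢ|, σ = Σⱼ bⱼ|bⱼ⟩⟨bⱼ|, then for all p > 0 and all i with gᵢ > 0,
Σ_{j : bⱼ ≤ p·gᵢ} |⟨bⱼ|gᵢ⟩|² ≤ 2^c·p. -/
theorem stmt3 {N : ℕ} (c : ℝ) (ρ' σ : Matrix (Fin N) (Fin N) ℂ)
    (g b : Fin N → ℝ) (gv bv : Fin N → (Fin N → ℂ))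
    (hgo : ∀ i j, star (gv i) ⬝ᵥ gv j = if i = j then 1 else 0)
    (hbo : ∀ i j, star (bv i) ⬝ᵥ bv j = if i = j then 1 else 0)
    (hgnn : ∀ i, 0 ≤ g i) (hbnn : ∀ i, 0 ≤ b i)
    (hg1 : ∑ i, g i = 1) (hb1 : ∑ i, b i = 1)
    (hρ' : ρ' = ∑ i, (g i : ℂ) • Matrix.vecMulVec (gv i) (star (gv i)))
    (hσ : σ = ∑ j, (b j : ℂ) • Matrix.vecMulVec (bv j) (star (bv j)))
    (hLoewner : (((2 : ℝ) ^ c) • σ - ρ').PosSemidef) :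
    ∀ p : ℝ, 0 < p → ∀ i, 0 < g i →
      ∑ j ∈ Finset.univ.filter (fun j => b j ≤ p * g i),
        ‖star (bv j) ⬝ᵥ gv i‖ ^ 2 ≤ (2 : ℝ) ^ c * p := by
  intro p hp i hgi
  set S := Finset.univ.filter (fun j => b j ≤ p * g i) with hS
  set cc : Fin N → ℂ := fun j => star (bv j) ⬝ᵥ gv i with hcc
  set y : Fin N → ℂ := ∑ j ∈ S, cc j • bv j with hy
  set T : ℝ := ∑ j ∈ S, ‖cc j‖ ^ 2 with hT
  show T ≤ (2:ℝ) ^ c * p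
  have hTnn : 0 ≤ T := Finset.sum_nonneg fun j _ => sq_nonneg _
  have h2c : (0:ℝ) < (2:ℝ) ^ c := Real.rpow_pos_of_pos two_pos c
  -- overlap of bv j with y
  have hby : ∀ j, star (bv j) ⬝ᵥ y = if j ∈ S then cc j else 0 := by
    intro j
    rw [hy, my_dot_sum]
    simp only [dotProduct_smul, smul_eq_mul, hbo]
    simp only [mul_ite, mul_one, mul_zero]
    rw [Finset.sum_ite_eq S j cc]
  -- overlap of gv i with y
  have hgy : star (gv i) ⬝ᵥ y = (T : ℂ) := by
    rw [hy, my_dot_sum, hT]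
    push_cast
    refine Finset.sum_congr rfl fun j _ => ?_
    rw [dotProduct_smul, smul_eq_mul, my_conj_dot (bv j) (gv i)]
    exact my_mul_conj (cc j)
  -- quadratic forms
  have hA : star y ⬝ᵥ ρ' *ᵥ y = ((∑ k, g k * ‖star (gv k) ⬝ᵥ y‖ ^ 2 : ℝ) : ℂ) := by
    rw [hρ', my_quad]
  have hB : star y ⬝ᵥ σ *ᵥ y = ((∑ j, b j * ‖star (bv j) ⬝ᵥ y‖ ^ 2 : ℝ) : ℂ) := by
    rw [hσ, my_quad]
  set RA : ℝ := ∑ k, g k * ‖star (gv k) ⬝ᵥ y‖ ^ 2 with hRA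
  set RB : ℝ := ∑ j, b j * ‖star (bv j) ⬝ᵥ y‖ ^ 2 with hRB
  -- PSD inequality
  have hineq : RA ≤ (2:ℝ) ^ c * RB := by
    have h0 := hLoewner.re_dotProduct_nonneg y
    rw [Matrix.sub_mulVec, dotProduct_sub, Matrix.smul_mulVec, dotProduct_smul,
      hA, hB] at h0
    rw [Complex.real_smul, ← Complex.ofReal_mul, ← Complex.ofReal_sub] at h0
    rw [show (RCLike.re : ℂ →+ ℝ) = Complex.reAddGroupHom from rfl] at h0
    simp only [Complex.reAddGroupHom, AddMonoidHom.coe_mk, ZeroHom.coe_mk, Complex.ofReal_re] at h0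
    linarith
  -- lower bound for RA
  have hAlow : g i * T ^ 2 ≤ RA := by
    have : g i * ‖star (gv i) ⬝ᵥ y‖ ^ 2 ≤ RA :=
      Finset.single_le_sum (f := fun k => g k * ‖star (gv k) ⬝ᵥ y‖ ^ 2)
        (fun k _ => mul_nonneg (hgnn k) (sq_nonneg _)) (Finset.mem_univ i)
    rwa [hgy, Complex.norm_real, Real.norm_eq_abs, sq_abs] at this
  -- upper bound for RB
  have hBhigh : RB ≤ p * g i * T := by
    have : RB = ∑ j ∈ S, b j * ‖cc j‖ ^ 2 := by
      rw [hRB, ← Finset.sum_filter_add_sum_filter_not Finset.univ (fun j => j ∈ S)]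
      have h1 : ∀ j ∈ Finset.univ.filter (fun j => j ∈ S),
          b j * ‖star (bv j) ⬝ᵥ y‖ ^ 2 = b j * ‖cc j‖ ^ 2 := by
        intro j hj
        rw [Finset.mem_filter] at hj
        rw [hby j, if_pos hj.2]
      have h2 : ∀ j ∈ Finset.univ.filter (fun j => ¬ j ∈ S),
          b j * ‖star (bv j) ⬝ᵥ y‖ ^ 2 = 0 := by
        intro j hj
        rw [Finset.mem_filter] at hj
        rw [hby j, if_neg hj.2]
        simp
      rw [Finset.sum_congr rfl h1, Finset.sum_congr rfl h2, Finset.sum_const_zero, add_zero]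
      congr 1
      ext j
      simp [hS]
    rw [this, hT, Finset.mul_sum]
    refine Finset.sum_le_sum fun j hj => ?_
    have hbj : b j ≤ p * g i := by
      rw [hS, Finset.mem_filter] at hj
      exact hj.2
    exact mul_le_mul_of_nonneg_right hbj (sq_nonneg _)
  -- conclude
  rcases eq_or_lt_of_le hTnn with hT0 | hT0
  · rw [← hT0]; positivity
  · have : g i * T ^ 2 ≤ (2:ℝ) ^ c * (p * g i * T) := le_trans hAlow
      (le_trans hineq (by nlinarith))
    have h2 : g i * T * T ≤ g i * T * ((2:ℝ) ^ c * p) := by nlinarith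
    exact le_of_mul_le_mul_left (by linarith [h2]) (mul_pos hgi hT0)
end
end

section
/- Let ρ = Σᵢ aᵢ|aᵢ⟩⟨aᵢ| be a state on ℂ^N with rational eigenvalues aᵢ = kᵢ/K for a common denominator K. Let |S⟩ = (1/√(KN)) Σ_{i=1}^N |i,i⟩_{A₁B₁} ⊗ Σ_{m=1}^K |m,m⟩_{A₂B₂}, and let P_A = Σᵢ |aᵢ⟩⟨aᵢ|_{A₁} ⊗ Σ_{m=1}^{K aᵢ} |m⟩⟨m|_{A₂}. Then ⟨S|(P_A ⊗ I_{B₁B₂})|S⟩ = 1/N, and the reduced state on registers A₁ of the normalized post-measurement state (P_A⊗I)|S⟩/‖(P_A⊗I)|S⟩‖ is ρ. -/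
/-!
`(P_A ⊗ I)|S⟩` is `1/√(KN)` times the vectorisation of `P_A`, so the overlap with `|S⟩`, the
norm, and the reduced state are `tr P_A`, `tr (P_A P_Aᴴ)` and the partial trace of `P_A P_Aᴴ` over
`A₂`, each divided by `KN`. Since `P_A` is block diagonal in `A₂`, its `m`-th block being the
projector onto the span of the `aᵢ` with `m < Kaᵢ`, it is an orthogonal projector, and summing
its blocks over `m` counts `|aᵢ⟩⟨aᵢ|` exactly `Kaᵢ` times: the partial trace is `Kρ`.
-/

open Matrix
open scoped Kronecker ComplexOrder

noncomputable section

/-- The shared state |S⟩ = (1/√(KN)) Σᵢ |i,i⟩_{A₁B₁} ⊗ Σₘ |m,m⟩_{A₂B₂},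
as a vector on (A₁ × A₂) × (B₁ × B₂). -/
def Svec (N K : ℕ) : (Fin N × Fin K) × (Fin N × Fin K) → ℂ :=
  fun v => if v.1.1 = v.2.1 ∧ v.1.2 = v.2.2
    then ((1 / Real.sqrt (K * N) : ℝ) : ℂ) else 0

/-- The projector Σᵢ |aᵢ⟩⟨aᵢ| ⊗ Σ_{m=1}^{ka i} |m⟩⟨m| on ℂ^N ⊗ ℂ^K,
built from unit vectors `av i` and cutoffs `ka i`. -/
def projMat {N K : ℕ} (av : Fin N → (Fin N → ℂ)) (ka : Fin N → ℕ) :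
    Matrix (Fin N × Fin K) (Fin N × Fin K) ℂ :=
  fun x y => ∑ i, av i x.1 * star (av i y.1) *
    (if x.2 = y.2 ∧ (x.2 : ℕ) < ka i then 1 else 0)

open Finset

section MaxEntangled

variable {R n : Type*} [Fintype n] [DecidableEq n]

def maxEntangled [Zero R] (c : R) : n × n → R := fun v => if v.1 = v.2 then c else 0

theorem kronecker_one_mulVec_maxEntangled_apply [Semiring R] (A : Matrix n n R) (c : R)
    (p q : n) : ((A ⊗ₖ (1 : Matrix n n R)) *ᵥ maxEntangled c) (p, q) = A p q * c := by
  simp [maxEntangled, mulVec, dotProduct, Fintype.sum_prod_type, one_apply]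

variable [CommSemiring R] [StarRing R]

theorem star_maxEntangled_dotProduct_kronecker_one_mulVec (A : Matrix n n R) (c : R) :
    star (maxEntangled c) ⬝ᵥ ((A ⊗ₖ (1 : Matrix n n R)) *ᵥ maxEntangled c)
      = trace A * (star c * c) := by
  simp only [dotProduct, Fintype.sum_prod_type, kronecker_one_mulVec_maxEntangled_apply, trace,
    Finset.sum_mul]
  refine sum_congr rfl fun p _ => ?_
  simp [maxEntangled, mul_left_comm, apply_ite star, mul_ite]

theorem sum_kronecker_one_mulVec_maxEntangled_mul_star (A : Matrix n n R) (c : R) (p p' : n) :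
    ∑ q, ((A ⊗ₖ (1 : Matrix n n R)) *ᵥ maxEntangled c) (p, q) *
        star (((A ⊗ₖ (1 : Matrix n n R)) *ᵥ maxEntangled c) (p', q))
      = (A * Aᴴ) p p' * (star c * c) := by
  simp only [kronecker_one_mulVec_maxEntangled_apply, mul_apply, conjTranspose_apply, star_mul',
    Finset.sum_mul]
  exact sum_congr rfl fun q _ => by ring

theorem star_dotProduct_self_kronecker_one_mulVec_maxEntangled (A : Matrix n n R) (c : R) :
    star ((A ⊗ₖ (1 : Matrix n n R)) *ᵥ maxEntangled c) ⬝ᵥ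
        ((A ⊗ₖ (1 : Matrix n n R)) *ᵥ maxEntangled c) = trace (A * Aᴴ) * (star c * c) := by
  simp only [dotProduct, Fintype.sum_prod_type, Pi.star_apply, trace, Matrix.diag, Finset.sum_mul,
    ← sum_kronecker_one_mulVec_maxEntangled_mul_star]
  exact sum_congr rfl fun p _ => sum_congr rfl fun q _ => mul_comm _ _

end MaxEntangled

theorem star_ofReal_one_div_sqrt_mul_self {x : ℝ} (hx : 0 ≤ x) :
    star ((1 / √x : ℝ) : ℂ) * ((1 / √x : ℝ) : ℂ) = (x : ℂ)⁻¹ := by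
  rw [Complex.star_def, Complex.conj_ofReal, ← Complex.ofReal_mul, one_div, ← mul_inv,
    Real.mul_self_sqrt hx, Complex.ofReal_inv]

section OrthonormalFamily

variable {ι n : Type*} (v : ι → n → ℂ)

def orthoProj (s : Finset ι) : Matrix n n ℂ := ∑ i ∈ s, vecMulVec (v i) (star (v i))

theorem conjTranspose_orthoProj (s : Finset ι) : (orthoProj v s)ᴴ = orthoProj v s := by
  simp [orthoProj, conjTranspose_sum, conjTranspose_vecMulVec]

variable {v} [Fintype n] [DecidableEq ι]

theorem orthoProj_mul_self (hv : ∀ i j, star (v i) ⬝ᵥ v j = if i = j then 1 else 0)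
    (s : Finset ι) : orthoProj v s * orthoProj v s = orthoProj v s := by
  simp [orthoProj, sum_mul_sum, vecMulVec_mul_vecMulVec, hv, apply_ite (vecMulVec _), sum_ite_eq]

theorem trace_sum_smul_vecMulVec_star_self [Fintype ι]
    (hv : ∀ i j, star (v i) ⬝ᵥ v j = if i = j then 1 else 0) (a : ι → ℂ) :
    trace (∑ i, a i • vecMulVec (v i) (star (v i))) = ∑ i, a i := by
  simp [trace_sum, trace_smul, trace_vecMulVec, dotProduct_comm (v _), hv]

end OrthonormalFamily

section Protocol

variable {N K : ℕ} (av : Fin N → Fin N → ℂ) (ka : Fin N → ℕ)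

theorem projMat_eq_blockDiagonal :
    projMat (K := K) av ka = blockDiagonal fun m : Fin K => orthoProj av {i | (m : ℕ) < ka i} := by
  ext ⟨x, m⟩ ⟨y, m'⟩
  simp [projMat, blockDiagonal_apply, orthoProj, Matrix.sum_apply, vecMulVec_apply, sum_filter,
    ite_and, mul_ite, apply_ite (fun M : Matrix (Fin N) (Fin N) ℂ => M x y)]

theorem projMat_mul_conjTranspose_self
    (hao : ∀ i j, star (av i) ⬝ᵥ av j = if i = j then 1 else 0) :
    projMat (K := K) av ka * (projMat av ka)ᴴ = projMat av ka := by
  rw [projMat_eq_blockDiagonal, blockDiagonal_conjTranspose, ← blockDiagonal_mul]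
  simp only [conjTranspose_orthoProj, orthoProj_mul_self hao]

theorem trace_projMat :
    trace (projMat (K := K) av ka) = trace (∑ m : Fin K, orthoProj av {i | (m : ℕ) < ka i}) := by
  rw [projMat_eq_blockDiagonal, trace_blockDiagonal, trace_sum]

theorem sum_projMat_apply (x y : Fin N) :
    ∑ m : Fin K, projMat av ka (x, m) (y, m)
      = (∑ m : Fin K, orthoProj av {i | (m : ℕ) < ka i}) x y := by
  simp only [projMat_eq_blockDiagonal, blockDiagonal_apply_eq, Matrix.sum_apply]

theorem sum_orthoProj_lt (hka : ∀ i, ka i ≤ K) :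
    ∑ m : Fin K, orthoProj av {i | (m : ℕ) < ka i}
      = ∑ i, (ka i : ℂ) • vecMulVec (av i) (star (av i)) := by
  simp only [orthoProj, sum_filter]
  rw [sum_comm]
  refine sum_congr rfl fun i _ => ?_
  rw [← sum_filter, sum_const, Fin.card_filter_val_lt, min_eq_right (hka i), Nat.cast_smul_eq_nsmul]

theorem sum_orthoProj_lt_eq_smul {ρ : Matrix (Fin N) (Fin N) ℂ} {a : Fin N → ℝ}
    (ha1 : ∑ i, a i = 1) (hρ : ρ = ∑ i, (a i : ℂ) • vecMulVec (av i) (star (av i)))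
    (hka : ∀ i, (ka i : ℝ) = K * a i) :
    ∑ m : Fin K, orthoProj av {i | (m : ℕ) < ka i} = (K : ℂ) • ρ := by
  have hsum_ka : ∑ i, ka i = K := by
    exact_mod_cast (by simp [hka, ← mul_sum, ha1] : ((∑ i, ka i : ℕ) : ℝ) = K)
  have hka_le : ∀ i, ka i ≤ K := fun i =>
    hsum_ka ▸ single_le_sum (fun _ _ => Nat.zero_le _) (mem_univ i)
  rw [sum_orthoProj_lt av ka hka_le, hρ, smul_sum]
  refine sum_congr rfl fun i _ => ?_
  rw [smul_smul, ← Complex.ofReal_natCast, hka i]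
  push_cast
  rfl

theorem Svec_eq_maxEntangled :
    Svec N K = maxEntangled ((1 / Real.sqrt (K * N) : ℝ) : ℂ) := by
  funext v
  simp [Svec, maxEntangled, Prod.ext_iff]

end Protocol

theorem stmt14_general {N K : ℕ} (hK : 0 < K)
    (ρ : Matrix (Fin N) (Fin N) ℂ) (a : Fin N → ℝ) (av : Fin N → (Fin N → ℂ))
    (hao : ∀ i j, star (av i) ⬝ᵥ av j = if i = j then 1 else 0)
    (ha1 : ∑ i, a i = 1)
    (hρ : ρ = ∑ i, (a i : ℂ) • Matrix.vecMulVec (av i) (star (av i)))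
    (ka : Fin N → ℕ) (hka : ∀ i, (ka i : ℝ) = K * a i)
    (ψ : (Fin N × Fin K) × (Fin N × Fin K) → ℂ)
    (hψ : ψ = ((projMat av ka) ⊗ₖ (1 : Matrix (Fin N × Fin K) (Fin N × Fin K) ℂ)).mulVec
      (Svec N K)) :
    star (Svec N K) ⬝ᵥ ψ = (1 / N : ℂ) ∧
    ∀ x y : Fin N,
      (∑ m : Fin K, ∑ j : Fin N, ∑ m' : Fin K,
          ψ ((x, m), (j, m')) * star (ψ ((y, m), (j, m')))) / (star ψ ⬝ᵥ ψ)
        = ρ x y := by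
  have hblocks := sum_orthoProj_lt_eq_smul av ka ha1 hρ hka
  have htrρ : trace ρ = 1 := by
    rw [hρ, trace_sum_smul_vecMulVec_star_self hao]
    exact_mod_cast ha1
  set P := projMat (K := K) av ka
  have hPP : P * Pᴴ = P := projMat_mul_conjTranspose_self av ka hao
  have htrP : trace P = K := by
    rw [trace_projMat, hblocks, trace_smul, htrρ, smul_eq_mul, mul_one]
  have hpartial : ∀ x y, ∑ m, P (x, m) (y, m) = K * ρ x y := fun x y => by
    rw [sum_projMat_apply, hblocks, Matrix.smul_apply, smul_eq_mul]
  set c : ℂ := ((1 / √(K * N) : ℝ) : ℂ)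
  have hc : star c * c = ((K : ℂ) * N)⁻¹ := by
    rw [star_ofReal_one_div_sqrt_mul_self (by positivity)]
    push_cast
    rfl
  have hK0 : (K : ℂ) ≠ 0 := by exact_mod_cast hK.ne'
  subst hψ
  rw [Svec_eq_maxEntangled]
  refine ⟨?_, fun x y => ?_⟩
  · rw [star_maxEntangled_dotProduct_kronecker_one_mulVec, htrP, hc]
    field_simp
  · have hN0 : (N : ℂ) ≠ 0 := by exact_mod_cast x.pos.ne'
    have hnum : ∑ m : Fin K, ∑ j : Fin N, ∑ m' : Fin K,
        ((P ⊗ₖ (1 : Matrix _ _ ℂ)) *ᵥ maxEntangled c) ((x, m), (j, m')) *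
          star (((P ⊗ₖ (1 : Matrix _ _ ℂ)) *ᵥ maxEntangled c) ((y, m), (j, m')))
        = ∑ m, (P * Pᴴ) (x, m) (y, m) * (star c * c) := sum_congr rfl fun m _ =>
      (Fintype.sum_prod_type _).symm.trans (sum_kronecker_one_mulVec_maxEntangled_mul_star P c _ _)
    rw [hnum, ← sum_mul, star_dotProduct_self_kronecker_one_mulVec_maxEntangled, hPP, hpartial,
      htrP, hc]
    field_simp

/-- with ρ = Σᵢ aᵢ|aᵢ⟩⟨aᵢ|, aᵢ = kaᵢ/K, P_A as in the protocol and
ψ = (P_A ⊗ I)|S⟩: ⟨S|(P_A ⊗ I)|S⟩ = 1/N, and the reduced state on register A₁ of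
the normalized post-measurement state ψ/‖ψ‖ is ρ. -/
theorem stmt14 {N K : ℕ} (hN : 0 < N) (hK : 0 < K)
    (ρ : Matrix (Fin N) (Fin N) ℂ) (a : Fin N → ℝ) (av : Fin N → (Fin N → ℂ))
    (hao : ∀ i j, star (av i) ⬝ᵥ av j = if i = j then 1 else 0)
    (hann : ∀ i, 0 ≤ a i) (ha1 : ∑ i, a i = 1)
    (hρ : ρ = ∑ i, (a i : ℂ) • Matrix.vecMulVec (av i) (star (av i)))
    (ka : Fin N → ℕ) (hka : ∀ i, (ka i : ℝ) = K * a i)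
    (ψ : (Fin N × Fin K) × (Fin N × Fin K) → ℂ)
    (hψ : ψ = ((projMat av ka) ⊗ₖ (1 : Matrix (Fin N × Fin K) (Fin N × Fin K) ℂ)).mulVec
      (Svec N K)) :
    star (Svec N K) ⬝ᵥ ψ = (1 / N : ℂ) ∧
    ∀ x y : Fin N,
      (∑ m : Fin K, ∑ j : Fin N, ∑ m' : Fin K,
          ψ ((x, m), (j, m')) * star (ψ ((y, m), (j, m')))) / (star ψ ⬝ᵥ ψ)
        = ρ x y :=
  stmt14_general hK ρ a av hao ha1 hρ ka hka ψ hψ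
end
end
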